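/- Infinitesimal Cheng theorem, operator form: let α ∈ [0, π), and let S : (α, π) → End(V) be a differentiable path of self-adjoint operators on an n-dimensional real inner product space V, satisfying S' + S² + R = 0 with R(t) self-adjoint and trace R(t) ≥ n. Suppose either α = 0, or S extends continuously to α with largest eigenvalue of S(α) at most cot(α). Then S(t) = cot(t)·id and R(t) = id for all t ∈ (α, π). -/

import Mathlib

/-!
Write `s = tr S / n`. For self-adjoint `S` one has `(tr S)² ≤ n · tr S²`, with equality only
for multiples of the identity, so the traced Riccati equation and `tr R ≥ n` give
`s' + s² + 1 ≤ 0`, while `cot' + cot² + 1 = 0`. The function `φ = (s - cot) sin²` then satisfies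
`φ' ≤ cot' · φ²`: it is antitone, and `1/φ + cot` is monotone on every interval where `φ` has
constant sign. A negative value of `φ` would keep `1/φ + cot` bounded below up to `π`, where
`cot → -∞`; a positive value would keep it bounded above down to `0`, where `cot → +∞`, and is
excluded directly by the boundary condition when `α > 0`. Hence `s = cot`, so `s' + s² + 1 = 0`,
which forces equality in `(tr S)² ≤ n · tr S²`: `S = cot · id`, and then `R = -S' - S² = id`.
-/

open Real Set Filter RealInnerProductSpace Topology

/-- Trace of a continuous linear endomorphism. -/
noncomputable def clmTrace (n : ℕ)
    (A : EuclideanSpace ℝ (Fin n) →L[ℝ] EuclideanSpace ℝ (Fin n)) : ℝ :=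
  LinearMap.trace ℝ (EuclideanSpace ℝ (Fin n)) (A : EuclideanSpace ℝ (Fin n) →ₗ[ℝ] EuclideanSpace ℝ (Fin n))

namespace LinearMap

variable {E : Type*} [NormedAddCommGroup E] [InnerProductSpace ℝ E]

lemma IsSymmetric.trace_comp_self_eq_sum_norm_sq {T : E →ₗ[ℝ] E} (hT : T.IsSymmetric)
    {ι : Type*} [Fintype ι] (b : OrthonormalBasis ι ℝ E) :
    trace ℝ E (T ∘ₗ T) = ∑ i, ‖T (b i)‖ ^ 2 := by
  rw [trace_eq_sum_inner _ b]
  refine Finset.sum_congr rfl fun i _ => ?_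
  rw [comp_apply, ← hT, real_inner_self_eq_norm_sq]

variable [FiniteDimensional ℝ E]

lemma trace_comp_sub_smul_id_self (T : E →ₗ[ℝ] E) (c : ℝ) :
    trace ℝ E ((T - c • id) ∘ₗ (T - c • id))
      = trace ℝ E (T ∘ₗ T) - 2 * c * trace ℝ E T + c ^ 2 * Module.finrank ℝ E := by
  have hexp : (T - c • id) ∘ₗ (T - c • id) = T ∘ₗ T - (2 * c) • T + c ^ 2 • id := by
    ext x
    simp only [comp_apply, sub_apply, smul_apply, id_apply, add_apply, map_sub, map_smul]
    module
  rw [hexp, map_add, map_sub, map_smul, map_smul, trace_id, smul_eq_mul, smul_eq_mul]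

lemma finrank_mul_trace_comp_self_sub_sq_trace (T : E →ₗ[ℝ] E) :
    Module.finrank ℝ E * trace ℝ E (T ∘ₗ T) - trace ℝ E T ^ 2
      = Module.finrank ℝ E *
          trace ℝ E ((T - (trace ℝ E T / Module.finrank ℝ E) • id) ∘ₗ
            (T - (trace ℝ E T / Module.finrank ℝ E) • id)) := by
  rcases (Module.finrank ℝ E).eq_zero_or_pos with hd | hd
  · have := Module.finrank_zero_iff.mp hd
    simp [Subsingleton.elim T 0]
  · rw [trace_comp_sub_smul_id_self]
    field_simp
    ring

lemma trace_le_of_inner_le {T : E →ₗ[ℝ] E} {c : ℝ}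
    (h : ∀ v, ⟪T v, v⟫ ≤ c * ‖v‖ ^ 2) :
    trace ℝ E T ≤ Module.finrank ℝ E * c := by
  set b := stdOrthonormalBasis ℝ E
  calc trace ℝ E T = ∑ i, ⟪T (b i), b i⟫ := by
        rw [trace_eq_sum_inner T b]; simp_rw [real_inner_comm]
    _ ≤ ∑ _i, c := Finset.sum_le_sum fun i _ => by simpa using h (b i)
    _ = Module.finrank ℝ E * c := by simp

namespace IsSymmetric

variable {T : E →ₗ[ℝ] E}

lemma trace_comp_self_nonneg (hT : T.IsSymmetric) : 0 ≤ trace ℝ E (T ∘ₗ T) := by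
  rw [hT.trace_comp_self_eq_sum_norm_sq (stdOrthonormalBasis ℝ E)]
  positivity

lemma eq_zero_of_trace_comp_self_nonpos (hT : T.IsSymmetric) (h : trace ℝ E (T ∘ₗ T) ≤ 0) :
    T = 0 := by
  set b := stdOrthonormalBasis ℝ E
  rw [hT.trace_comp_self_eq_sum_norm_sq b] at h
  have hzero := (Finset.sum_eq_zero_iff_of_nonneg fun i _ => sq_nonneg ‖T (b i)‖).mp
    (le_antisymm h (by positivity))
  refine b.toBasis.ext fun i => ?_
  simpa using hzero i (Finset.mem_univ i)

lemma sq_trace_le (hT : T.IsSymmetric) :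
    trace ℝ E T ^ 2 ≤ Module.finrank ℝ E * trace ℝ E (T ∘ₗ T) := by
  have hT₀ := hT.sub (IsSymmetric.id.smul (conj_trivial (trace ℝ E T / Module.finrank ℝ E)))
  have := finrank_mul_trace_comp_self_sub_sq_trace T
  nlinarith [hT₀.trace_comp_self_nonneg, (Module.finrank ℝ E).cast_nonneg (α := ℝ)]

lemma eq_smul_id_of_finrank_mul_trace_comp_self_le (hT : T.IsSymmetric)
    (h : Module.finrank ℝ E * trace ℝ E (T ∘ₗ T) ≤ trace ℝ E T ^ 2) :
    T = (trace ℝ E T / Module.finrank ℝ E) • id := by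
  rcases (Module.finrank ℝ E).eq_zero_or_pos with hd | hd
  · have := Module.finrank_zero_iff.mp hd
    exact Subsingleton.elim _ _
  have hT₀ := hT.sub (IsSymmetric.id.smul (conj_trivial (trace ℝ E T / Module.finrank ℝ E)))
  have hdefect := finrank_mul_trace_comp_self_sub_sq_trace T
  have hnonpos : trace ℝ E ((T - (trace ℝ E T / Module.finrank ℝ E) • id) ∘ₗ
      (T - (trace ℝ E T / Module.finrank ℝ E) • id)) ≤ 0 :=
    nonpos_of_mul_nonpos_right (hdefect ▸ sub_nonpos.mpr h) (Nat.cast_pos.mpr hd)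
  exact sub_eq_zero.mp (hT₀.eq_zero_of_trace_comp_self_nonpos hnonpos)

end IsSymmetric

end LinearMap

namespace Real

lemma cot_mul_sin_sq (x : ℝ) : cot x * sin x ^ 2 = sin x * cos x := by
  rcases eq_or_ne (sin x) 0 with h | h
  · simp [h]
  · rw [cot_eq_cos_div_sin]; field_simp

lemma one_add_cot_sq {x : ℝ} (h : sin x ≠ 0) : 1 + cot x ^ 2 = 1 / sin x ^ 2 := by
  rw [cot_eq_cos_div_sin]; field_simp; linarith [sin_sq_add_cos_sq x]

lemma hasDerivAt_cot {x : ℝ} (h : sin x ≠ 0) : HasDerivAt cot (-(1 + cot x ^ 2)) x := by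
  rw [one_add_cot_sq h, show cot = fun y => cos y / sin y from funext cot_eq_cos_div_sin]
  refine ((hasDerivAt_cos x).div (hasDerivAt_sin x) h).congr_deriv ?_
  field_simp; linarith [sin_sq_add_cos_sq x]

lemma tendsto_cot_nhdsGT_zero : Tendsto cot (𝓝[>] 0) atTop := by
  have hsin : Tendsto sin (𝓝[>] 0) (𝓝[>] 0) := by
    refine tendsto_nhdsWithin_of_tendsto_nhds_of_eventually_within _ ?_ ?_
    · exact (continuous_sin.tendsto' 0 0 sin_zero).mono_left nhdsWithin_le_nhds
    · filter_upwards [Ioo_mem_nhdsGT pi_pos] with x hx using sin_pos_of_mem_Ioo hx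
  have hcos : Tendsto cos (𝓝[>] 0) (𝓝 1) :=
    (continuous_cos.tendsto' 0 1 cos_zero).mono_left nhdsWithin_le_nhds
  convert hcos.pos_mul_atTop one_pos hsin.inv_tendsto_nhdsGT_zero using 1
  ext x; rw [cot_eq_cos_div_sin, div_eq_mul_inv]; rfl

lemma tendsto_cot_nhdsLT_pi : Tendsto cot (𝓝[<] π) atBot := by
  have hsin : Tendsto sin (𝓝[<] π) (𝓝[>] 0) := by
    refine tendsto_nhdsWithin_of_tendsto_nhds_of_eventually_within _ ?_ ?_
    · exact (continuous_sin.tendsto' π 0 sin_pi).mono_left nhdsWithin_le_nhds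
    · filter_upwards [Ioo_mem_nhdsLT pi_pos] with x hx using sin_pos_of_mem_Ioo hx
  have hcos : Tendsto cos (𝓝[<] π) (𝓝 (-1)) :=
    (continuous_cos.tendsto' π (-1) cos_pi).mono_left nhdsWithin_le_nhds
  convert hcos.neg_mul_atTop (by norm_num) hsin.inv_tendsto_nhdsGT_zero using 1
  ext x; rw [cot_eq_cos_div_sin, div_eq_mul_inv]; rfl

end Real

section RiccatiComparison

variable {f f' : ℝ → ℝ} {D : Set ℝ}

lemma monotoneOn_of_forall_hasDerivAt_nonneg (hD : Convex ℝ D)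
    (hf : ∀ x ∈ D, HasDerivAt f (f' x) x) (hf' : ∀ x ∈ D, 0 ≤ f' x) : MonotoneOn f D :=
  monotoneOn_of_hasDerivWithinAt_nonneg hD (fun x hx => (hf x hx).continuousAt.continuousWithinAt)
    (fun x hx => (hf x (interior_subset hx)).hasDerivWithinAt)
    (fun x hx => hf' x (interior_subset hx))

lemma antitoneOn_of_forall_hasDerivAt_nonpos (hD : Convex ℝ D)
    (hf : ∀ x ∈ D, HasDerivAt f (f' x) x) (hf' : ∀ x ∈ D, f' x ≤ 0) : AntitoneOn f D :=
  antitoneOn_of_hasDerivWithinAt_nonpos hD (fun x hx => (hf x hx).continuousAt.continuousWithinAt)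
    (fun x hx => (hf x (interior_subset hx)).hasDerivWithinAt)
    (fun x hx => hf' x (interior_subset hx))

lemma AntitoneOn.le_of_tendsto_nhdsGT {a b L : ℝ} (hf : AntitoneOn f (Ioo a b))
    (hL : Tendsto f (𝓝[>] a) (𝓝 L)) : ∀ x ∈ Ioo a b, f x ≤ L := fun x hx =>
  ge_of_tendsto hL <| by
    filter_upwards [Ioo_mem_nhdsGT hx.1] with y hy
    exact hf ⟨hy.1, hy.2.trans hx.2⟩ hx hy.2.le

variable {φ φ' c c' : ℝ → ℝ}

lemma monotoneOn_inv_add_of_le_mul_sq (hD : Convex ℝ D)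
    (hφ : ∀ x ∈ D, HasDerivAt φ (φ' x) x) (hc : ∀ x ∈ D, HasDerivAt c (c' x) x)
    (hφ0 : ∀ x ∈ D, φ x ≠ 0) (hle : ∀ x ∈ D, φ' x ≤ c' x * φ x ^ 2) :
    MonotoneOn (fun x => (φ x)⁻¹ + c x) D :=
  monotoneOn_of_forall_hasDerivAt_nonneg hD
    (fun x hx => ((hφ x hx).inv (hφ0 x hx)).add (hc x hx))
    (fun x hx => by
      have hsq : 0 < φ x ^ 2 := by positivity [hφ0 x hx]
      rw [neg_div, neg_add_eq_sub, sub_nonneg, div_le_iff₀ hsq]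
      exact hle x hx)

variable {a b : ℝ}
  (hφ : ∀ x ∈ Ioo a b, HasDerivAt φ (φ' x) x) (hc : ∀ x ∈ Ioo a b, HasDerivAt c (c' x) x)
  (hc' : ∀ x ∈ Ioo a b, c' x ≤ 0) (hle : ∀ x ∈ Ioo a b, φ' x ≤ c' x * φ x ^ 2)
include hφ hc' hle

lemma antitoneOn_of_le_mul_sq : AntitoneOn φ (Ioo a b) :=
  antitoneOn_of_forall_hasDerivAt_nonpos (convex_Ioo a b) hφ fun x hx =>
    (hle x hx).trans (mul_nonpos_of_nonpos_of_nonneg (hc' x hx) (sq_nonneg _))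

include hc

lemma nonneg_of_le_mul_sq_of_tendsto_atBot (hcb : Tendsto c (𝓝[<] b) atBot) :
    ∀ x ∈ Ioo a b, 0 ≤ φ x := by
  intro t ht
  by_contra! hneg
  have hsub : Ico t b ⊆ Ioo a b := Ico_subset_Ioo_left ht.1
  have hφneg : ∀ x ∈ Ico t b, φ x < 0 := fun x hx =>
    ((antitoneOn_of_le_mul_sq hφ hc' hle) ht (hsub hx) hx.1).trans_lt hneg
  have hmono := monotoneOn_inv_add_of_le_mul_sq (convex_Ico t b) (fun x hx => hφ x (hsub hx))
    (fun x hx => hc x (hsub hx)) (fun x hx => (hφneg x hx).ne) (fun x hx => hle x (hsub hx))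
  obtain ⟨x, hcx, hx⟩ := ((hcb.eventually (eventually_lt_atBot ((φ t)⁻¹ + c t))).and
    (Ioo_mem_nhdsLT ht.2)).exists
  have hχ := hmono (left_mem_Ico.mpr ht.2) (Ioo_subset_Ico_self hx) hx.1.le
  have hinv := inv_lt_zero.mpr (hφneg x (Ioo_subset_Ico_self hx))
  simp only at hχ
  linarith

lemma nonpos_of_le_mul_sq_of_tendsto_atTop (hca : Tendsto c (𝓝[>] a) atTop) :
    ∀ x ∈ Ioo a b, φ x ≤ 0 := by
  intro t ht
  by_contra! hpos
  have hsub : Ioc a t ⊆ Ioo a b := Ioc_subset_Ioo_right ht.2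
  have hφpos : ∀ x ∈ Ioc a t, 0 < φ x := fun x hx =>
    hpos.trans_le ((antitoneOn_of_le_mul_sq hφ hc' hle) (hsub hx) ht hx.2)
  have hmono := monotoneOn_inv_add_of_le_mul_sq (convex_Ioc a t) (fun x hx => hφ x (hsub hx))
    (fun x hx => hc x (hsub hx)) (fun x hx => (hφpos x hx).ne') (fun x hx => hle x (hsub hx))
  obtain ⟨x, hcx, hx⟩ := ((hca.eventually (eventually_gt_atTop ((φ t)⁻¹ + c t))).and
    (Ioo_mem_nhdsGT ht.1)).exists
  have hχ := hmono (Ioo_subset_Ioc_self hx) (right_mem_Ioc.mpr ht.1) hx.2.le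
  have hinv := inv_pos.mpr (hφpos x (Ioo_subset_Ioc_self hx))
  simp only at hχ
  linarith

end RiccatiComparison

-- Written without `cot` so that it stays continuous where `sin` vanishes.
noncomputable def cotDefect (s : ℝ → ℝ) (t : ℝ) : ℝ := s t * sin t ^ 2 - sin t * cos t

section cotDefect

variable {s : ℝ → ℝ} {s' t : ℝ}

lemma cotDefect_eq : cotDefect s t = (s t - cot t) * sin t ^ 2 := by
  rw [cotDefect, sub_mul, cot_mul_sin_sq]

lemma hasDerivAt_cotDefect (hs : HasDerivAt s s' t) : HasDerivAt (cotDefect s)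
    (s' * sin t ^ 2 + s t * (2 * sin t * cos t) - (cos t * cos t - sin t * sin t)) t := by
  refine ((hs.mul ((hasDerivAt_sin t).pow 2)).sub
    ((hasDerivAt_sin t).mul (hasDerivAt_cos t))).congr_deriv ?_
  simp only [Pi.pow_apply]
  ring

lemma cotDefect_deriv_le (hsin : sin t ≠ 0) (hric : s' + s t ^ 2 + 1 ≤ 0) :
    s' * sin t ^ 2 + s t * (2 * sin t * cos t) - (cos t * cos t - sin t * sin t)
      ≤ -(1 + cot t ^ 2) * cotDefect s t ^ 2 := by
  have hsq : -(1 + cot t ^ 2) * cotDefect s t ^ 2 = -(s t * sin t - cos t) ^ 2 := by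
    rw [cotDefect, one_add_cot_sq hsin]
    field_simp
  rw [hsq]
  nlinarith [mul_nonpos_of_nonpos_of_nonneg hric (sq_nonneg (sin t))]

lemma tendsto_cotDefect_nhdsGT {α σ : ℝ} (hs : Tendsto s (𝓝[>] α) (𝓝 σ)) :
    Tendsto (cotDefect s) (𝓝[>] α) (𝓝 ((σ - cot α) * sin α ^ 2)) := by
  rw [sub_mul, cot_mul_sin_sq]
  have hsin_sq : Continuous fun t => sin t ^ 2 := by fun_prop
  exact (hs.mul hsin_sq.continuousWithinAt.tendsto).sub
    (continuous_sin.mul continuous_cos).continuousWithinAt.tendsto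

end cotDefect

theorem eqOn_cot_of_riccati_le {α : ℝ} (hα : α ∈ Ico 0 π) {s s' : ℝ → ℝ}
    (hs : ∀ t ∈ Ioo α π, HasDerivAt s (s' t) t)
    (hric : ∀ t ∈ Ioo α π, s' t + s t ^ 2 + 1 ≤ 0)
    (hbd : α = 0 ∨ ∃ σ ≤ cot α, Tendsto s (𝓝[>] α) (𝓝 σ)) :
    EqOn s cot (Ioo α π) := by
  have hsin : ∀ t ∈ Ioo α π, sin t ≠ 0 := fun t ht =>
    (sin_pos_of_mem_Ioo ⟨hα.1.trans_lt ht.1, ht.2⟩).ne'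
  have hφ := fun t ht => hasDerivAt_cotDefect (hs t ht)
  have hle := fun t ht => cotDefect_deriv_le (hsin t ht) (hric t ht)
  have hcot := fun t ht => hasDerivAt_cot (hsin t ht)
  have hcot' : ∀ t ∈ Ioo α π, -(1 + cot t ^ 2) ≤ 0 := fun t _ =>
    neg_nonpos.mpr (by positivity)
  have hφ_nonneg := nonneg_of_le_mul_sq_of_tendsto_atBot hφ hcot hcot' hle tendsto_cot_nhdsLT_pi
  have hφ_nonpos : ∀ t ∈ Ioo α π, cotDefect s t ≤ 0 := by
    rcases hbd with rfl | ⟨σ, hσ, hlim⟩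
    · exact nonpos_of_le_mul_sq_of_tendsto_atTop hφ hcot hcot' hle tendsto_cot_nhdsGT_zero
    · intro t ht
      exact ((antitoneOn_of_le_mul_sq hφ hcot' hle).le_of_tendsto_nhdsGT
        (tendsto_cotDefect_nhdsGT hlim) t ht).trans
        (mul_nonpos_of_nonpos_of_nonneg (sub_nonpos.mpr hσ) (sq_nonneg _))
  intro t ht
  have hzero : (s t - cot t) * sin t ^ 2 = 0 := by
    rw [← cotDefect_eq]; exact le_antisymm (hφ_nonpos t ht) (hφ_nonneg t ht)
  exact sub_eq_zero.mp ((mul_eq_zero.mp hzero).resolve_right (pow_ne_zero 2 (hsin t ht)))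

section clmTrace

variable {n : ℕ}

noncomputable def clmTraceCLM (n : ℕ) :
    (EuclideanSpace ℝ (Fin n) →L[ℝ] EuclideanSpace ℝ (Fin n)) →L[ℝ] ℝ :=
  LinearMap.toContinuousLinearMap
    ((LinearMap.trace ℝ (EuclideanSpace ℝ (Fin n))).comp (ContinuousLinearMap.coeLM ℝ))

lemma clmTraceCLM_apply (A : EuclideanSpace ℝ (Fin n) →L[ℝ] EuclideanSpace ℝ (Fin n)) :
    clmTraceCLM n A = clmTrace n A :=
  rfl

lemma clmTrace_le_of_inner_le {A : EuclideanSpace ℝ (Fin n) →L[ℝ] EuclideanSpace ℝ (Fin n)}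
    {c : ℝ} (h : ∀ v, ⟪A v, v⟫ ≤ c * ‖v‖ ^ 2) : clmTrace n A ≤ n * c := by
  have := LinearMap.trace_le_of_inner_le (T := (A : EuclideanSpace ℝ (Fin n) →ₗ[ℝ] _)) h
  rwa [finrank_euclideanSpace_fin] at this

lemma sq_clmTrace_le {S : EuclideanSpace ℝ (Fin n) →L[ℝ] EuclideanSpace ℝ (Fin n)}
    (hS : IsSelfAdjoint S) : clmTrace n S ^ 2 ≤ n * clmTrace n (S ∘L S) := by
  have := (ContinuousLinearMap.isSelfAdjoint_iff_isSymmetric.mp hS).sq_trace_le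
  rwa [finrank_euclideanSpace_fin] at this

lemma eq_smul_id_of_mul_clmTrace_comp_self_le
    {S : EuclideanSpace ℝ (Fin n) →L[ℝ] EuclideanSpace ℝ (Fin n)} (hS : IsSelfAdjoint S)
    (h : n * clmTrace n (S ∘L S) ≤ clmTrace n S ^ 2) :
    S = (clmTrace n S / n) • ContinuousLinearMap.id ℝ (EuclideanSpace ℝ (Fin n)) := by
  have := (ContinuousLinearMap.isSelfAdjoint_iff_isSymmetric.mp hS)
    |>.eq_smul_id_of_finrank_mul_trace_comp_self_le (by rwa [finrank_euclideanSpace_fin])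
  rw [finrank_euclideanSpace_fin] at this
  exact ContinuousLinearMap.coe_injective this

variable {S S' R : EuclideanSpace ℝ (Fin n) →L[ℝ] EuclideanSpace ℝ (Fin n)}

lemma clmTrace_riccati_eq (hn : 0 < n) (h : S' + S ∘L S + R = 0) :
    clmTrace n S' / n + (clmTrace n S / n) ^ 2 + 1
      = (clmTrace n S ^ 2 - n * clmTrace n (S ∘L S) + n * (n - clmTrace n R)) / n ^ 2 := by
  have htr : clmTrace n S' = -clmTrace n (S ∘L S) - clmTrace n R := by
    have := congrArg (clmTraceCLM n) h
    simp only [map_add, map_zero, clmTraceCLM_apply] at this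
    linarith
  have hn' : (n : ℝ) ≠ 0 := Nat.cast_ne_zero.mpr hn.ne'
  rw [htr]
  field_simp
  ring

lemma clmTrace_riccati_le (hn : 0 < n) (hS : IsSelfAdjoint S) (hR : n ≤ clmTrace n R)
    (h : S' + S ∘L S + R = 0) : clmTrace n S' / n + (clmTrace n S / n) ^ 2 + 1 ≤ 0 := by
  rw [clmTrace_riccati_eq hn h]
  refine div_nonpos_of_nonpos_of_nonneg ?_ (sq_nonneg _)
  nlinarith [sq_clmTrace_le hS, (Nat.cast_nonneg n : (0 : ℝ) ≤ n)]

lemma eq_smul_id_of_clmTrace_riccati_eq (hn : 0 < n) (hS : IsSelfAdjoint S)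
    (hR : n ≤ clmTrace n R) (h : S' + S ∘L S + R = 0)
    (heq : clmTrace n S' / n + (clmTrace n S / n) ^ 2 + 1 = 0) :
    S = (clmTrace n S / n) • ContinuousLinearMap.id ℝ (EuclideanSpace ℝ (Fin n)) := by
  rw [clmTrace_riccati_eq hn h, div_eq_zero_iff, or_iff_left (by positivity)] at heq
  refine eq_smul_id_of_mul_clmTrace_comp_self_le hS ?_
  nlinarith [(Nat.cast_nonneg n : (0 : ℝ) ≤ n)]

end clmTrace

theorem stmt_9_general (n : ℕ) (hn : 1 ≤ n) (α : ℝ) (hα : α ∈ Set.Ico 0 π)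
    (S S' R : ℝ → EuclideanSpace ℝ (Fin n) →L[ℝ] EuclideanSpace ℝ (Fin n))
    (hS : ∀ t ∈ Set.Ioo α π, HasDerivAt S (S' t) t)
    (hsa : ∀ t ∈ Set.Ioo α π, IsSelfAdjoint (S t))
    (htrR : ∀ t ∈ Set.Ioo α π, (n : ℝ) ≤ clmTrace n (R t))
    (hric : ∀ t ∈ Set.Ioo α π, S' t + S t ∘L S t + R t = 0)
    (hbd : α = 0 ∨ ∃ Sα : EuclideanSpace ℝ (Fin n) →L[ℝ] EuclideanSpace ℝ (Fin n),
      Filter.Tendsto S (nhdsWithin α (Set.Ioi α)) (nhds Sα) ∧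
      ∀ v : EuclideanSpace ℝ (Fin n), ⟪Sα v, v⟫ ≤ Real.cot α * ‖v‖ ^ 2) :
    ∀ t ∈ Set.Ioo α π,
      S t = Real.cot t • ContinuousLinearMap.id ℝ (EuclideanSpace ℝ (Fin n)) ∧
      R t = ContinuousLinearMap.id ℝ (EuclideanSpace ℝ (Fin n)) := by
  set I := ContinuousLinearMap.id ℝ (EuclideanSpace ℝ (Fin n))
  have hsin : ∀ t ∈ Ioo α π, sin t ≠ 0 := fun t ht =>
    (sin_pos_of_mem_Ioo ⟨hα.1.trans_lt ht.1, ht.2⟩).ne'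
  have hs : ∀ t ∈ Ioo α π,
      HasDerivAt (fun u => clmTrace n (S u) / n) (clmTrace n (S' t) / n) t :=
    fun t ht => ((clmTraceCLM n).hasFDerivAt.comp_hasDerivAt t (hS t ht)).div_const n
  have hs_cot : EqOn (fun u => clmTrace n (S u) / n) cot (Ioo α π) := by
    refine eqOn_cot_of_riccati_le hα hs
      (fun t ht => clmTrace_riccati_le hn (hsa t ht) (htrR t ht) (hric t ht)) ?_
    refine hbd.imp_right fun ⟨Sα, hlim, hle⟩ => ⟨clmTrace n Sα / n, ?_, ?_⟩
    · exact (div_le_iff₀' (Nat.cast_pos.mpr hn)).mpr (clmTrace_le_of_inner_le hle)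
    · exact (((clmTraceCLM n).continuous.tendsto Sα).comp hlim).div_const n
  have hS_cot : ∀ t ∈ Ioo α π, S t = cot t • I := fun t ht => by
    have hds : clmTrace n (S' t) / n = -(1 + cot t ^ 2) :=
      (hs t ht).unique ((hasDerivAt_cot (hsin t ht)).congr_of_eventuallyEq
        (hs_cot.eventuallyEq_of_mem (isOpen_Ioo.mem_nhds ht)))
    have hst : clmTrace n (S t) / n = cot t := hs_cot ht
    have := eq_smul_id_of_clmTrace_riccati_eq hn (hsa t ht) (htrR t ht) (hric t ht)
      (by rw [hds, hst]; ring)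
    rwa [hst] at this
  intro t ht
  have hS' : S' t = -(1 + cot t ^ 2) • I :=
    (hS t ht).unique (((hasDerivAt_cot (hsin t ht)).smul_const I).congr_of_eventuallyEq
      (Filter.eventuallyEq_of_mem (isOpen_Ioo.mem_nhds ht) hS_cot))
  refine ⟨hS_cot t ht, ?_⟩
  rw [eq_neg_of_add_eq_zero_right (hric t ht), hS', hS_cot t ht, ContinuousLinearMap.smul_comp,
    ContinuousLinearMap.comp_smul, ContinuousLinearMap.id_comp, smul_smul]
  module

/-- Infinitesimal Cheng theorem, operator form: a self-adjoint solution of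
`S' + S² + R = 0` on `(α, π)` with `R` self-adjoint, `trace R ≥ n`, and (when `α ≠ 0`)
continuous boundary value at `α` whose largest eigenvalue is at most `cot α`, must be
`cot t • id`, with `R ≡ id`. -/
theorem stmt_9 (n : ℕ) (hn : 1 ≤ n) (α : ℝ) (hα : α ∈ Set.Ico 0 π)
    (S S' R : ℝ → EuclideanSpace ℝ (Fin n) →L[ℝ] EuclideanSpace ℝ (Fin n))
    (hS : ∀ t ∈ Set.Ioo α π, HasDerivAt S (S' t) t)
    (hsa : ∀ t ∈ Set.Ioo α π, IsSelfAdjoint (S t))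
    (hRsa : ∀ t ∈ Set.Ioo α π, IsSelfAdjoint (R t))
    (htrR : ∀ t ∈ Set.Ioo α π, (n : ℝ) ≤ clmTrace n (R t))
    (hric : ∀ t ∈ Set.Ioo α π, S' t + S t ∘L S t + R t = 0)
    (hbd : α = 0 ∨ ∃ Sα : EuclideanSpace ℝ (Fin n) →L[ℝ] EuclideanSpace ℝ (Fin n),
      Filter.Tendsto S (nhdsWithin α (Set.Ioi α)) (nhds Sα) ∧
      ∀ v : EuclideanSpace ℝ (Fin n), ⟪Sα v, v⟫ ≤ Real.cot α * ‖v‖ ^ 2) :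
    ∀ t ∈ Set.Ioo α π,
      S t = Real.cot t • ContinuousLinearMap.id ℝ (EuclideanSpace ℝ (Fin n)) ∧
      R t = ContinuousLinearMap.id ℝ (EuclideanSpace ℝ (Fin n)) :=
  stmt_9_general n hn α hα S S' R hS hsa htrR hric hbd
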